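/- arXiv:2109.02819 — 7 statements merged into one kernel-verified Lean document; each statement's English description precedes it below -/
import Mathlib

section
/- Let A = [a_{ij}] and B = [b_{ij}] be n × n positive definite complex matrices, and let 2 ≤ p ≤ n. Then det(A_p ∘ B_p)/det(A_{p−1} ∘ B_{p−1}) + det(A_p B_p)/det(A_{p−1} B_{p−1}) ≥ a_{pp} · det B_p / det B_{p−1} + b_{pp} · det A_p / det A_{p−1}, where A_p = [a_{ij}]_{i,j=1}^{p} and B_p = [b_{ij}]_{i,j=1}^{p} are the p × p leading principal submatrices, all quantities are positive reals, and the inequality is of real numbers. -/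
open Matrix ComplexOrder

/-- The `p × p` leading principal submatrix `A_p` (for `p ≤ n`) of an `n × n` matrix. -/
def leadSub {n : ℕ} (A : Matrix (Fin n) (Fin n) ℂ) (p : ℕ) (h : p ≤ n) :
    Matrix (Fin p) (Fin p) ℂ :=
  A.submatrix (Fin.castLE h) (Fin.castLE h)

/-!
Write a positive definite `C = A_p` in block form `[[C', x], [x*, c]]` with `C' = A_{p-1}`.
The Schur complement formula gives `det C / det C' = c - x* C'⁻¹ x`; applied to `A`, `B` and
`A ∘ B` (whose blocks are `A' ∘ B'` and `x ∘ y`), and together with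
`det (A_p B_p) = det A_p det B_p`, it reduces the inequality to
`(x ∘ y)* (A' ∘ B')⁻¹ (x ∘ y) ≤ (x* A'⁻¹ x) (y* B'⁻¹ y)`.
This holds because `[[A', x], [x*, x* A'⁻¹ x]]` and `[[B', y], [y*, y* B'⁻¹ y]]` are positive
semidefinite (their Schur complements vanish), hence so is their Hadamard product by the Schur
product theorem, and the difference above is the Schur complement of `A' ∘ B'` in that product.
-/

namespace Matrix

theorem fromBlocks_hadamard {l m n o α : Type*} [Mul α] (A : Matrix n l α) (B : Matrix n m α)
    (C : Matrix o l α) (D : Matrix o m α) (A' : Matrix n l α) (B' : Matrix n m α)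
    (C' : Matrix o l α) (D' : Matrix o m α) :
    fromBlocks A B C D ⊙ fromBlocks A' B' C' D' =
      fromBlocks (A ⊙ A') (B ⊙ B') (C ⊙ C') (D ⊙ D') := by
  ext (i | i) (j | j) <;> rfl

theorem toBlocks₁₁_hadamard {l m n o α : Type*} [Mul α] (A B : Matrix (n ⊕ o) (l ⊕ m) α) :
    (A ⊙ B).toBlocks₁₁ = A.toBlocks₁₁ ⊙ B.toBlocks₁₁ :=
  rfl

theorem IsHermitian.toBlocks₂₁_eq {m n α : Type*} [Star α] {C : Matrix (m ⊕ n) (m ⊕ n) α}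
    (hC : C.IsHermitian) : C.toBlocks₂₁ = C.toBlocks₁₂ᴴ := by
  ext i j
  exact (hC.apply _ _).symm

theorem PosDef.toBlocks₁₁ {m n R : Type*} [Ring R] [PartialOrder R] [StarRing R]
    {C : Matrix (m ⊕ n) (m ⊕ n) R} (hC : C.PosDef) : C.toBlocks₁₁.PosDef :=
  hC.submatrix Sum.inl_injective

section SchurProduct

variable {𝕜 : Type*} [RCLike 𝕜] {m n : Type*} [Fintype m] [DecidableEq m] [Finite n]

theorem PosDef.posSemidef_fromBlocks_conjTranspose_mul_inv_mul {A : Matrix m m 𝕜}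
    (hA : A.PosDef) (X : Matrix m n 𝕜) : (fromBlocks A X Xᴴ (Xᴴ * A⁻¹ * X)).PosSemidef := by
  let := hA.isUnit.invertible
  rw [PosDef.fromBlocks₁₁ X _ hA, sub_self]
  exact PosSemidef.zero

theorem PosDef.posSemidef_hadamard_sub_conjTranspose_hadamard_mul_inv_mul {A B : Matrix m m 𝕜}
    (hA : A.PosDef) (hB : B.PosDef) (X Y : Matrix m n 𝕜) :
    ((Xᴴ * A⁻¹ * X) ⊙ (Yᴴ * B⁻¹ * Y) - (X ⊙ Y)ᴴ * (A ⊙ B)⁻¹ * (X ⊙ Y)).PosSemidef := by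
  have hAB := hA.hadamard hB
  let := hAB.isUnit.invertible
  have h := (hA.posSemidef_fromBlocks_conjTranspose_mul_inv_mul X).hadamard
    (hB.posSemidef_fromBlocks_conjTranspose_mul_inv_mul Y)
  rwa [fromBlocks_hadamard, hadamard_comm Xᴴ, ← conjTranspose_hadamard,
    PosDef.fromBlocks₁₁ _ _ hAB] at h

end SchurProduct

theorem PosDef.re_det_mul {n : Type*} [Fintype n] [DecidableEq n] {A : Matrix n n ℂ}
    (hA : A.PosDef) (N : Matrix n n ℂ) : (A * N).det.re = A.det.re * N.det.re := by
  obtain ⟨-, him⟩ := Complex.lt_def.mp hA.det_pos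
  rw [det_mul, Complex.mul_re, ← him, Complex.zero_im, zero_mul, sub_zero]

section Bordered

variable {m : Type*} [Fintype m] [DecidableEq m]

/-- For `C = [[C', x], [y, c]]` with a single last row and column, the scalar `y C'⁻¹ x`. -/
noncomputable def borderForm {α : Type*} [CommRing α] (C : Matrix (m ⊕ Fin 1) (m ⊕ Fin 1) α) :
    α :=
  (C.toBlocks₂₁ * C.toBlocks₁₁⁻¹ * C.toBlocks₁₂) 0 0

theorem det_eq_det_toBlocks₁₁_mul_sub_borderForm {α : Type*} [CommRing α]
    (C : Matrix (m ⊕ Fin 1) (m ⊕ Fin 1) α) [Invertible C.toBlocks₁₁] :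
    C.det = C.toBlocks₁₁.det * (C (.inr 0) (.inr 0) - borderForm C) := by
  conv_lhs => rw [← fromBlocks_toBlocks C]
  rw [det_fromBlocks₁₁, det_fin_one, invOf_eq_nonsing_inv]
  rfl

theorem PosDef.re_det_div_re_det_toBlocks₁₁ {C : Matrix (m ⊕ Fin 1) (m ⊕ Fin 1) ℂ}
    (hC : C.PosDef) :
    C.det.re / C.toBlocks₁₁.det.re = (C (.inr 0) (.inr 0)).re - (borderForm C).re := by
  let := hC.toBlocks₁₁.isUnit.invertible
  obtain ⟨hpos, him⟩ := Complex.lt_def.mp hC.toBlocks₁₁.det_pos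
  rw [Complex.zero_re] at hpos
  rw [det_eq_det_toBlocks₁₁_mul_sub_borderForm, Complex.mul_re, ← him, Complex.zero_im, zero_mul,
    sub_zero, mul_div_cancel_left₀ _ hpos.ne', Complex.sub_re]

theorem PosDef.borderForm_nonneg {C : Matrix (m ⊕ Fin 1) (m ⊕ Fin 1) ℂ} (hC : C.PosDef) :
    0 ≤ borderForm C := by
  rw [borderForm, hC.1.toBlocks₂₁_eq]
  exact (hC.toBlocks₁₁.inv.posSemidef.conjTranspose_mul_mul_same _).diag_nonneg

theorem PosDef.borderForm_hadamard_le {A B : Matrix (m ⊕ Fin 1) (m ⊕ Fin 1) ℂ} (hA : A.PosDef)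
    (hB : B.PosDef) : borderForm (A ⊙ B) ≤ borderForm A * borderForm B := by
  have h := (hA.toBlocks₁₁.posSemidef_hadamard_sub_conjTranspose_hadamard_mul_inv_mul
    hB.toBlocks₁₁ A.toBlocks₁₂ B.toBlocks₁₂).diag_nonneg (i := 0)
  rw [sub_apply, hadamard_apply, sub_nonneg] at h
  rwa [borderForm, borderForm, borderForm, hA.1.toBlocks₂₁_eq, hB.1.toBlocks₂₁_eq,
    (hA.hadamard hB).1.toBlocks₂₁_eq]

theorem PosDef.re_borderForm_hadamard_le {A B : Matrix (m ⊕ Fin 1) (m ⊕ Fin 1) ℂ}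
    (hA : A.PosDef) (hB : B.PosDef) :
    (borderForm (A ⊙ B)).re ≤ (borderForm A).re * (borderForm B).re := by
  obtain ⟨hle, -⟩ := Complex.le_def.mp (hA.borderForm_hadamard_le hB)
  obtain ⟨-, him⟩ := Complex.le_def.mp hA.borderForm_nonneg
  rwa [Complex.mul_re, ← him, Complex.zero_im, zero_mul, sub_zero] at hle

theorem PosDef.det_ratio_hadamard_add_det_ratio_mul_ge {A B : Matrix (m ⊕ Fin 1) (m ⊕ Fin 1) ℂ}
    (hA : A.PosDef) (hB : B.PosDef) :
    (A ⊙ B).det.re / (A.toBlocks₁₁ ⊙ B.toBlocks₁₁).det.re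
        + (A * B).det.re / (A.toBlocks₁₁ * B.toBlocks₁₁).det.re ≥
      (A (.inr 0) (.inr 0)).re * B.det.re / B.toBlocks₁₁.det.re
        + (B (.inr 0) (.inr 0)).re * A.det.re / A.toBlocks₁₁.det.re := by
  have hAB : (A ⊙ B).det.re / (A.toBlocks₁₁ ⊙ B.toBlocks₁₁).det.re =
      (A (.inr 0) (.inr 0)).re * (B (.inr 0) (.inr 0)).re - (borderForm (A ⊙ B)).re := by
    obtain ⟨-, him⟩ := Complex.lt_def.mp (hA.diag_pos (i := .inr 0))
    rw [← toBlocks₁₁_hadamard, (hA.hadamard hB).re_det_div_re_det_toBlocks₁₁, hadamard_apply, Complex.mul_re, ← him,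
      Complex.zero_im, zero_mul, sub_zero]
  rw [hA.re_det_mul, hA.toBlocks₁₁.re_det_mul, mul_div_mul_comm, mul_div_assoc, mul_div_assoc,
    hAB, hA.re_det_div_re_det_toBlocks₁₁, hB.re_det_div_re_det_toBlocks₁₁]
  linear_combination hA.re_borderForm_hadamard_le hB

end Bordered

end Matrix

/-- **Lemma 2.1.** For `n × n` positive definite matrices `A, B` and `2 ≤ p ≤ n`,
`det(A_p ∘ B_p)/det(A_{p-1} ∘ B_{p-1}) + det(A_p B_p)/det(A_{p-1} B_{p-1}) ≥
 a_{pp} det B_p/det B_{p-1} + b_{pp} det A_p/det A_{p-1}`. -/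
theorem lemma21_scalar {n : ℕ} (A B : Matrix (Fin n) (Fin n) ℂ)
    (hA : A.PosDef) (hB : B.PosDef) (p : ℕ) (hp2 : 2 ≤ p) (hpn : p ≤ n) :
    (Matrix.hadamard (leadSub A p hpn) (leadSub B p hpn)).det.re /
        (Matrix.hadamard (leadSub A (p - 1) (by omega)) (leadSub B (p - 1) (by omega))).det.re +
      (leadSub A p hpn * leadSub B p hpn).det.re /
        (leadSub A (p - 1) (by omega) * leadSub B (p - 1) (by omega)).det.re ≥
    (A ⟨p - 1, by omega⟩ ⟨p - 1, by omega⟩).re *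
        (leadSub B p hpn).det.re / (leadSub B (p - 1) (by omega)).det.re +
      (B ⟨p - 1, by omega⟩ ⟨p - 1, by omega⟩).re *
        (leadSub A p hpn).det.re / (leadSub A (p - 1) (by omega)).det.re := by
  obtain ⟨q, rfl⟩ : ∃ q, p = q + 1 := ⟨p - 1, by omega⟩
  -- reindexed along `Fin q ⊕ Fin 1 ≃ Fin (q + 1)`, the leading block of `C_{q+1}` is `C_q`
  have hlead {C : Matrix (Fin n) (Fin n) ℂ} (hC : C.PosDef) :
      ((leadSub C (q + 1) hpn).submatrix finSumFinEquiv finSumFinEquiv).PosDef :=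
    (hC.submatrix (Fin.castLE_injective hpn)).submatrix finSumFinEquiv.injective
  have key := (hlead hA).det_ratio_hadamard_add_det_ratio_mul_ge (hlead hB)
  rw [← submatrix_hadamard, submatrix_mul_equiv] at key
  simp only [det_submatrix_equiv_self] at key
  exact key
end

section
/- Let x_i, y_i, w_i, z_i (i = 1, …, n) be nonnegative real numbers such that for every i: x_i ≥ w_i ≥ y_i, x_i ≥ z_i ≥ y_i, and x_i + y_i ≥ w_i + z_i. Then ∏_{i=1}^{n} x_i + ∏_{i=1}^{n} y_i ≥ ∏_{i=1}^{n} w_i + ∏_{i=1}^{n} z_i. -/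
/-! The conditions `0 ≤ y ≤ w, z` and `w + z ≤ x + y` on a quadruple survive coordinatewise
multiplication of two quadruples, because
`x x' + y y' - w w' - z z' = (x - (w + z - y)) x' + (w + z - y) (x' - (w' + z' - y'))`
`  + (w - y) (z' - y') + (z - y) (w' - y')`
has four nonnegative terms. Multiplying up the `n` quadruples gives the theorem. -/

variable {R : Type*} [CommRing R] [PartialOrder R] [IsOrderedRing R]

structure PairDominates (x y w z : R) : Prop where
  nonneg : 0 ≤ y
  le_left : y ≤ w
  le_right : y ≤ z
  sum_le : w + z ≤ x + y

namespace PairDominates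

theorem one : PairDominates (1 : R) 1 1 1 :=
  ⟨zero_le_one, le_rfl, le_rfl, le_rfl⟩

theorem mul {x y w z x' y' w' z' : R} (h : PairDominates x y w z)
    (h' : PairDominates x' y' w' z') : PairDominates (x * x') (y * y') (w * w') (z * z') := by
  obtain ⟨hy, hyw, hyz, hsum⟩ := h
  obtain ⟨hy', hyw', hyz', hsum'⟩ := h'
  refine ⟨mul_nonneg hy hy', mul_le_mul hyw hyw' hy' (hy.trans hyw),
    mul_le_mul hyz hyz' hy' (hy.trans hyz), ?_⟩
  have hs : 0 ≤ w + z - y := by linear_combination hy + hyw + hyz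
  have hx' : 0 ≤ x' := by linear_combination hy' + hyw' + hyz' + hsum'
  linear_combination mul_nonneg (sub_nonneg.2 (le_sub_iff_add_le.2 hsum)) hx'
    + mul_nonneg hs (sub_nonneg.2 (sub_le_iff_le_add.2 hsum'))
    + mul_nonneg (sub_nonneg.2 hyw) (sub_nonneg.2 hyz')
    + mul_nonneg (sub_nonneg.2 hyz) (sub_nonneg.2 hyw')

theorem prod {ι : Type*} {s : Finset ι} {x y w z : ι → R}
    (h : ∀ i ∈ s, PairDominates (x i) (y i) (w i) (z i)) :
    PairDominates (∏ i ∈ s, x i) (∏ i ∈ s, y i) (∏ i ∈ s, w i) (∏ i ∈ s, z i) := by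
  induction s using Finset.cons_induction with
  | empty => simpa using one
  | cons a s ha ih =>
    simp only [Finset.prod_cons]
    exact (h a (Finset.mem_cons_self a s)).mul (ih fun i hi => h i (Finset.mem_cons_of_mem hi))

end PairDominates

theorem prod_add_prod_ge_general {n : ℕ} (x y w z : Fin n → ℝ)
    (hy : ∀ i, 0 ≤ y i)
    (hwy : ∀ i, y i ≤ w i)
    (hzy : ∀ i, y i ≤ z i)
    (hsum : ∀ i, w i + z i ≤ x i + y i) :
    (∏ i, x i) + (∏ i, y i) ≥ (∏ i, w i) + (∏ i, z i) :=
  (PairDominates.prod fun i _ => ⟨hy i, hwy i, hzy i, hsum i⟩).sum_le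

/-- **Corollary 2.3.** For nonnegative reals `x_i, y_i, w_i, z_i` with
`x_i ≥ w_i ≥ y_i`, `x_i ≥ z_i ≥ y_i` and `x_i + y_i ≥ w_i + z_i` for all `i`,
`∏ x_i + ∏ y_i ≥ ∏ w_i + ∏ z_i`. -/
theorem prod_add_prod_ge {n : ℕ} (x y w z : Fin n → ℝ)
    (hx : ∀ i, 0 ≤ x i) (hy : ∀ i, 0 ≤ y i) (hw : ∀ i, 0 ≤ w i) (hz : ∀ i, 0 ≤ z i)
    (hxw : ∀ i, w i ≤ x i) (hwy : ∀ i, y i ≤ w i)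
    (hxz : ∀ i, z i ≤ x i) (hzy : ∀ i, y i ≤ z i)
    (hsum : ∀ i, w i + z i ≤ x i + y i) :
    (∏ i, x i) + (∏ i, y i) ≥ (∏ i, w i) + (∏ i, z i) :=
  prod_add_prod_ge_general x y w z hy hwy hzy hsum
end

section
/- Let A and B be positive definite p × p complex matrices and let X and Y be p × q complex matrices. Then the q × q matrix (X*A⁻¹X) ∘ (Y*B⁻¹Y) − (X ∘ Y)* (A ∘ B)⁻¹ (X ∘ Y) is positive semidefinite, where M* denotes the conjugate transpose of M. -/
open Matrix ComplexOrder

/-! The block matrix `[[A, X], [X*, X* A⁻¹ X]]` is positive semidefinite, its Schur complement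
being zero; likewise for `B` and `Y`. By the Schur product theorem the entrywise product of the two
block matrices, which is the block matrix `[[A ∘ B, X ∘ Y], [(X ∘ Y)*, (X* A⁻¹ X) ∘ (Y* B⁻¹ Y)]]`,
is positive semidefinite as well, and since `A ∘ B` is positive definite its Schur complement is
exactly the matrix of the theorem. -/

namespace Matrix

theorem hadamard_fromBlocks {l m n o α : Type*} [Mul α]
    (A A' : Matrix l n α) (B B' : Matrix l o α) (C C' : Matrix m n α) (D D' : Matrix m o α) :
    fromBlocks A B C D ⊙ fromBlocks A' B' C' D' =
      fromBlocks (A ⊙ A') (B ⊙ B') (C ⊙ C') (D ⊙ D') := by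
  ext (i | i) (j | j) <;> rfl

theorem PosDef.fromBlocks_conjTranspose_inv_posSemidef {m n K : Type*} [Fintype m]
    [DecidableEq m] [Finite n] [Field K] [PartialOrder K] [StarRing K] [StarOrderedRing K]
    {A : Matrix m m K} (hA : A.PosDef) (B : Matrix m n K) :
    (fromBlocks A B Bᴴ (Bᴴ * A⁻¹ * B)).PosSemidef := by
  have := hA.isUnit.invertible
  rw [hA.fromBlocks₁₁, sub_self]
  exact .zero

end Matrix

/-- The key Schur-complement inequality: for positive definite `p × p` matrices
`A, B` and `p × q` matrices `X, Y`,
`(X*A⁻¹X) ∘ (Y*B⁻¹Y) ≥ (X∘Y)* (A∘B)⁻¹ (X∘Y)` in the Löwner order. -/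
theorem hadamard_conj_inv_posSemidef {p q : ℕ}
    (A B : Matrix (Fin p) (Fin p) ℂ) (X Y : Matrix (Fin p) (Fin q) ℂ)
    (hA : A.PosDef) (hB : B.PosDef) :
    (Matrix.hadamard (Xᴴ * A⁻¹ * X) (Yᴴ * B⁻¹ * Y) -
        (Matrix.hadamard X Y)ᴴ * (Matrix.hadamard A B)⁻¹ *
          (Matrix.hadamard X Y)).PosSemidef := by
  have hAB : (A ⊙ B).PosDef := hA.hadamard hB
  have := hAB.isUnit.invertible
  have hblocks := (hA.fromBlocks_conjTranspose_inv_posSemidef X).hadamard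
    (hB.fromBlocks_conjTranspose_inv_posSemidef Y)
  rw [hadamard_fromBlocks, ← conjTranspose_hadamard, hadamard_comm Y X] at hblocks
  exact (hAB.fromBlocks₁₁ _ _).mp hblocks
end

section
/- Let m, n ≥ 1 and let a⁽ⁱ⁾_μ (for i = 1, …, m and μ = 1, …, n) be real numbers with a⁽ⁱ⁾_μ ≥ 1 for all i and μ. Then ∏_{μ=1}^{n} ( Σ_{i=1}^{m} a⁽ⁱ⁾_μ − (m − 1) ) ≥ Σ_{i=1}^{m} ∏_{μ=1}^{n} a⁽ⁱ⁾_μ − (m − 1). -/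
/-!
Writing every entry as `1 + u` with `u ≥ 0`, the quantity `∑ i, x i - (m - 1)` becomes
`1 + ∑ i, u i`. For two factors the inequality then reduces to `∑ i, u i * v i ≤ (∑ i, u i) * (∑ i, v i)`
for nonnegative `u, v`, and the general case follows by induction on the number of factors,
since every shifted sum is at least `1`.
-/

open Finset

namespace Finset

variable {ι : Type*} (s : Finset ι)

lemma sum_mul_le_sum_mul_sum {u v : ι → ℝ} (hu : ∀ i ∈ s, 0 ≤ u i) (hv : ∀ i ∈ s, 0 ≤ v i) :
    ∑ i ∈ s, u i * v i ≤ (∑ i ∈ s, u i) * ∑ i ∈ s, v i := by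
  rw [sum_mul]
  exact sum_le_sum fun i hi => mul_le_mul_of_nonneg_left (single_le_sum hv hi) (hu i hi)

lemma sum_sub_card_sub_one_eq (x : ι → ℝ) :
    ∑ i ∈ s, x i - ((#s : ℝ) - 1) = 1 + ∑ i ∈ s, (x i - 1) := by
  rw [sum_sub_distrib, sum_const, nsmul_one]
  ring

lemma one_le_sum_sub_card_sub_one {x : ι → ℝ} (hx : ∀ i ∈ s, 1 ≤ x i) :
    1 ≤ ∑ i ∈ s, x i - ((#s : ℝ) - 1) := by
  rw [sum_sub_card_sub_one_eq]
  linarith [sum_nonneg fun i hi => sub_nonneg.2 (hx i hi)]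

lemma sum_mul_sub_card_sub_one_le {x y : ι → ℝ} (hx : ∀ i ∈ s, 1 ≤ x i)
    (hy : ∀ i ∈ s, 1 ≤ y i) :
    ∑ i ∈ s, x i * y i - ((#s : ℝ) - 1) ≤
      (∑ i ∈ s, x i - ((#s : ℝ) - 1)) * (∑ i ∈ s, y i - ((#s : ℝ) - 1)) := by
  have hxy : ∀ i, x i * y i - 1 = (x i - 1) * (y i - 1) + (x i - 1) + (y i - 1) :=
    fun i => by ring
  simp only [sum_sub_card_sub_one_eq, hxy, sum_add_distrib]
  nlinarith [sum_mul_le_sum_mul_sum s (fun i hi => sub_nonneg.2 (hx i hi))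
    (fun i hi => sub_nonneg.2 (hy i hi))]

lemma sum_prod_sub_card_sub_one_le {κ : Type*} (t : Finset κ) {a : ι → κ → ℝ}
    (ha : ∀ i ∈ s, ∀ μ ∈ t, 1 ≤ a i μ) :
    ∑ i ∈ s, ∏ μ ∈ t, a i μ - ((#s : ℝ) - 1) ≤
      ∏ μ ∈ t, (∑ i ∈ s, a i μ - ((#s : ℝ) - 1)) := by
  classical
  induction t using Finset.induction_on with
  | empty => simp
  | insert ν t hν ih =>
    have ha' : ∀ i ∈ s, ∀ μ ∈ t, 1 ≤ a i μ := fun i hi μ hμ => ha i hi μ (mem_insert_of_mem hμ)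
    have haν : ∀ i ∈ s, 1 ≤ a i ν := fun i hi => ha i hi ν (mem_insert_self ν t)
    simp only [prod_insert hν]
    calc ∑ i ∈ s, a i ν * ∏ μ ∈ t, a i μ - ((#s : ℝ) - 1)
        ≤ (∑ i ∈ s, a i ν - ((#s : ℝ) - 1)) * (∑ i ∈ s, ∏ μ ∈ t, a i μ - ((#s : ℝ) - 1)) :=
          sum_mul_sub_card_sub_one_le s haν fun i hi => one_le_prod (ha' i hi)
      _ ≤ (∑ i ∈ s, a i ν - ((#s : ℝ) - 1)) * ∏ μ ∈ t, (∑ i ∈ s, a i μ - ((#s : ℝ) - 1)) :=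
          mul_le_mul_of_nonneg_left (ih ha')
            (zero_le_one.trans (one_le_sum_sub_card_sub_one s haν))

end Finset

theorem prod_sum_sub_ge_sum_prod_sub_general {m n : ℕ}
    (a : Fin m → Fin n → ℝ) (ha : ∀ i μ, 1 ≤ a i μ) :
    ∏ μ, ((∑ i, a i μ) - ((m : ℝ) - 1)) ≥ (∑ i, ∏ μ, a i μ) - ((m : ℝ) - 1) := by
  simpa using sum_prod_sub_card_sub_one_le univ univ fun i _ μ _ => ha i μ

/-- **Lemma 3.1.** If `a⁽ⁱ⁾_μ ≥ 1` for all `i = 1,…,m` and `μ = 1,…,n`, then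
`∏_μ (∑_i a⁽ⁱ⁾_μ − (m−1)) ≥ ∑_i ∏_μ a⁽ⁱ⁾_μ − (m−1)`. -/
theorem prod_sum_sub_ge_sum_prod_sub {m n : ℕ} (hm : 1 ≤ m) (hn : 1 ≤ n)
    (a : Fin m → Fin n → ℝ) (ha : ∀ i μ, 1 ≤ a i μ) :
    ∏ μ, ((∑ i, a i μ) - ((m : ℝ) - 1)) ≥ (∑ i, ∏ μ, a i μ) - ((m : ℝ) - 1) :=
  prod_sum_sub_ge_sum_prod_sub_general a ha
end

section
/- Let a_1, …, a_n and b_1, …, b_n be real numbers with a_μ ≥ 1 and b_μ ≥ 1 for every μ. Then ∏_{μ=1}^{n} (a_μ + b_μ − 1) ≥ ∏_{μ=1}^{n} a_μ + ∏_{μ=1}^{n} b_μ − 1. -/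
/-!
Peel off one factor and induct. With `A, B` the new factors and `P, Q` the remaining products,
`(A + B - 1) (P + Q - 1) - (A P + B Q - 1) = (A - 1) (Q - 1) + (B - 1) (P - 1) ≥ 0`.
-/

section OrderedRing

variable {R : Type*} [CommRing R] [PartialOrder R] [IsOrderedRing R]

theorem mul_add_mul_sub_one_le_add_sub_one_mul_add_sub_one {a b p q : R}
    (ha : 1 ≤ a) (hb : 1 ≤ b) (hp : 1 ≤ p) (hq : 1 ≤ q) :
    a * p + b * q - 1 ≤ (a + b - 1) * (p + q - 1) := by
  have key : 0 ≤ (a - 1) * (q - 1) + (b - 1) * (p - 1) :=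
    add_nonneg (mul_nonneg (sub_nonneg.2 ha) (sub_nonneg.2 hq))
      (mul_nonneg (sub_nonneg.2 hb) (sub_nonneg.2 hp))
  linear_combination key

theorem Finset.prod_add_prod_sub_one_le_prod_add_sub_one {ι : Type*} (s : Finset ι) {a b : ι → R}
    (ha : ∀ i ∈ s, 1 ≤ a i) (hb : ∀ i ∈ s, 1 ≤ b i) :
    ∏ i ∈ s, a i + ∏ i ∈ s, b i - 1 ≤ ∏ i ∈ s, (a i + b i - 1) := by
  classical
  induction s using Finset.induction_on with
  | empty => simp
  | insert j s hj ih =>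
    simp only [Finset.mem_insert, forall_eq_or_imp] at ha hb
    rw [Finset.prod_insert hj, Finset.prod_insert hj, Finset.prod_insert hj]
    have hab : 0 ≤ a j + b j - 1 := by linear_combination ha.1 + hb.1
    calc a j * ∏ i ∈ s, a i + b j * ∏ i ∈ s, b i - 1
        ≤ (a j + b j - 1) * (∏ i ∈ s, a i + ∏ i ∈ s, b i - 1) :=
          mul_add_mul_sub_one_le_add_sub_one_mul_add_sub_one ha.1 hb.1
            (Finset.one_le_prod ha.2) (Finset.one_le_prod hb.2)
      _ ≤ (a j + b j - 1) * ∏ i ∈ s, (a i + b i - 1) :=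
          mul_le_mul_of_nonneg_left (ih ha.2 hb.2) hab

end OrderedRing

/-- Inequality (3.3): if `a_μ ≥ 1` and `b_μ ≥ 1` for all `μ`, then
`∏_μ (a_μ + b_μ − 1) ≥ ∏_μ a_μ + ∏_μ b_μ − 1`. -/
theorem prod_add_sub_one_ge {n : ℕ} (a b : Fin n → ℝ)
    (ha : ∀ μ, 1 ≤ a μ) (hb : ∀ μ, 1 ≤ b μ) :
    ∏ μ, (a μ + b μ - 1) ≥ (∏ μ, a μ) + (∏ μ, b μ) - 1 :=
  Finset.univ.prod_add_prod_sub_one_le_prod_add_sub_one (fun μ _ ↦ ha μ) (fun μ _ ↦ hb μ)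
end

section
/- Let X, Y, W, Z be positive semidefinite n × n complex matrices such that X − W, W − Y, X − Z, Z − Y, and (X + Y) − (W + Z) are all positive semidefinite. Then det X + det Y ≥ det W + det Z, where all four determinants are nonnegative reals and the inequality is of real numbers. -/
/-!
On the positive semidefinite cone the determinant is monotone and supermodular,
`det (A + P) + det (A + Q) ≤ det (A + P + Q) + det A`. With `A = Y`, `P = W - Y`, `Q = Z - Y`
this gives `det W + det Z ≤ det (W + Z - Y) + det Y ≤ det X + det Y`.

After a unitary change of basis the added matrix is a nonnegative diagonal, which can be added
one entry at a time. Raising the diagonal entry at `a` by `t` raises the determinant by `t`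
times the principal minor that omits `a`. For monotonicity this minor is nonnegative; for
supermodularity it must grow when `Q` is added, which is monotonicity one dimension down.
-/

open Matrix ComplexOrder

theorem Pi.apply_zero_le_of_le_apply_add_single {ι α β : Type*} [Fintype ι] [DecidableEq ι]
    [AddCommMonoid α] [PartialOrder α] [IsOrderedAddMonoid α] [Preorder β]
    {g : (ι → α) → β} (step : ∀ d, 0 ≤ d → ∀ a t, 0 ≤ t → g d ≤ g (d + Pi.single a t))
    {d : ι → α} (hd : 0 ≤ d) : g 0 ≤ g d := by
  suffices ∀ s : Finset ι, g 0 ≤ g (∑ a ∈ s, Pi.single a (d a)) by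
    simpa [Finset.univ_sum_single] using this Finset.univ
  intro s
  induction s using Finset.induction_on with
  | empty => simp
  | insert a s ha ih =>
    rw [Finset.sum_insert ha, add_comm]
    have hs : 0 ≤ ∑ i ∈ s, Pi.single i (d i) :=
      Finset.sum_nonneg fun i _ => Pi.single_nonneg.2 (hd i)
    exact ih.trans (step _ hs a _ (hd a))

namespace Matrix

section CommRing

variable {m R : Type*} [Fintype m] [DecidableEq m] [CommRing R]

theorem adjugate_apply_self (M : Matrix m m R) (a : m) :
    M.adjugate a a = (M.submatrix ((↑) : {i // i ≠ a} → m) (↑)).det := by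
  set N := M.updateRow a (Pi.single a 1)
  have hN₁ : ∀ i j : {i // i = a}, N.toSquareBlockProp _ i j = 1 := by
    rintro ⟨_, rfl⟩ ⟨_, rfl⟩
    simp [N, toSquareBlockProp_def]
  have hN₂ : N.toSquareBlockProp (fun i => ¬i = a) = M.submatrix (↑) (↑) := by
    ext i j
    simp [N, toSquareBlockProp_def, updateRow_ne i.2]
  rw [adjugate_apply, twoBlockTriangular_det' N (· = a), hN₂]
  · simp only [det_unique, hN₁, one_mul]
  · rintro i rfl j hj
    simp [N, hj]

theorem det_add_diagonal_single (M : Matrix m m R) (a : m) (t : R) :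
    (M + diagonal (Pi.single a t)).det =
      M.det + t * (M.submatrix ((↑) : {i // i ≠ a} → m) (↑)).det := by
  have : M + diagonal (Pi.single a t) = M.updateRow a (M a + t • Pi.single a 1) := by
    ext i j
    rcases eq_or_ne i a with rfl | hi
    · simp [diagonal_apply, Pi.single_apply, eq_comm]
    · simp [hi, diagonal_apply]
  rw [this, det_updateRow_add, det_updateRow_smul, updateRow_eq_self, ← adjugate_apply,
    adjugate_apply_self]

end CommRing

variable {m 𝕜 : Type*} [Fintype m] [DecidableEq m] [RCLike 𝕜]

theorem det_star_mul_mul_of_mem_unitary {U : Matrix m m 𝕜} (hU : U ∈ unitary (Matrix m m 𝕜))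
    (M : Matrix m m 𝕜) : (star U * M * U).det = M.det :=
  det_conj_of_mul_eq_one (Unitary.star_mul_self_of_mem hU) (Unitary.mul_star_self_of_mem hU)

namespace PosSemidef

theorem exists_star_mul_mul_eq_diagonal {P : Matrix m m 𝕜} (hP : P.PosSemidef) :
    ∃ U ∈ unitary (Matrix m m 𝕜), ∃ d : m → 𝕜, 0 ≤ d ∧ star U * P * U = diagonal d :=
  ⟨_, hP.isHermitian.eigenvectorUnitary.2, _,
    fun i => by simpa using hP.eigenvalues_nonneg i,
    (Unitary.conjStarAlgAut_star_apply _ _).symm.trans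
      hP.isHermitian.conjStarAlgAut_star_eigenvectorUnitary⟩

theorem det_le_det_add_diagonal {B : Matrix m m 𝕜} (hB : B.PosSemidef) {d : m → 𝕜}
    (hd : 0 ≤ d) : B.det ≤ (B + diagonal d).det := by
  have := Pi.apply_zero_le_of_le_apply_add_single (g := fun d => (B + diagonal d).det) ?_ hd
  · simpa using this
  intro d hd a t ht
  rw [Pi.add_def, ← diagonal_add, ← add_assoc, det_add_diagonal_single]
  exact le_add_of_nonneg_right <|
    mul_nonneg ht ((hB.add (posSemidef_diagonal_iff.2 hd)).submatrix _).det_nonneg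

theorem det_le_det_add {B R : Matrix m m 𝕜} (hB : B.PosSemidef) (hR : R.PosSemidef) :
    B.det ≤ (B + R).det := by
  obtain ⟨U, hU, d, hd, hRd⟩ := hR.exists_star_mul_mul_eq_diagonal
  have := (hB.conjTranspose_mul_mul_same U).det_le_det_add_diagonal hd
  rwa [← hRd, ← star_eq_conjTranspose, ← add_mul, ← mul_add,
    det_star_mul_mul_of_mem_unitary hU, det_star_mul_mul_of_mem_unitary hU] at this

theorem det_add_add_det_le_of_diagonal {A Q : Matrix m m 𝕜} (hA : A.PosSemidef)
    (hQ : Q.PosSemidef) {d : m → 𝕜} (hd : 0 ≤ d) :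
    (A + diagonal d).det + (A + Q).det ≤ (A + diagonal d + Q).det + A.det := by
  have : (A + Q).det - A.det ≤ (A + diagonal d + Q).det - (A + diagonal d).det := by
    refine (Pi.apply_zero_le_of_le_apply_add_single
      (g := fun d => (A + diagonal d + Q).det - (A + diagonal d).det) ?_ hd).trans_eq' ?_
    · intro d hd a t ht
      rw [Pi.add_def, ← diagonal_add, ← add_assoc, add_right_comm (A + diagonal d) _ Q,
        det_add_diagonal_single, det_add_diagonal_single]
      have hminor : ((A + diagonal d).submatrix ((↑) : {i // i ≠ a} → m) (↑)).det ≤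
          ((A + diagonal d + Q).submatrix ((↑) : {i // i ≠ a} → m) (↑)).det :=
        ((hA.add (posSemidef_diagonal_iff.2 hd)).submatrix _).det_le_det_add (hQ.submatrix _)
      linear_combination t * hminor
    · simp only [Pi.zero_def, diagonal_zero, add_zero]
  rwa [sub_le_sub_iff, add_comm] at this

theorem det_add_add_det_le {A P Q : Matrix m m 𝕜} (hA : A.PosSemidef)
    (hP : P.PosSemidef) (hQ : Q.PosSemidef) :
    (A + P).det + (A + Q).det ≤ (A + P + Q).det + A.det := by
  obtain ⟨U, hU, d, hd, hPd⟩ := hP.exists_star_mul_mul_eq_diagonal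
  have := (hA.conjTranspose_mul_mul_same U).det_add_add_det_le_of_diagonal
    (hQ.conjTranspose_mul_mul_same U) hd
  simpa only [← hPd, ← star_eq_conjTranspose, ← add_mul, ← mul_add,
    det_star_mul_mul_of_mem_unitary hU] using this

end PosSemidef

end Matrix

theorem det_add_det_ge_det_add_det_general {n : ℕ}
    (X Y W Z : Matrix (Fin n) (Fin n) ℂ)
    (hY : Y.PosSemidef)
    (hWY : (W - Y).PosSemidef)
    (hZY : (Z - Y).PosSemidef)
    (hsum : (X + Y - (W + Z)).PosSemidef) :
    X.det.re + Y.det.re ≥ W.det.re + Z.det.re := by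
  have hsuper := hY.det_add_add_det_le hWY hZY
  have hmono := (hY.add hWY |>.add hZY).det_le_det_add hsum
  simp only [add_sub_cancel] at hsuper hmono
  rw [show W + (Z - Y) + (X + Y - (W + Z)) = X by abel] at hmono
  have := Complex.le_def.1 (hsuper.trans (add_le_add_left hmono _))
  simpa using this.1

/-- **Lemma 2.2 (Lin).** If `X, Y, W, Z` are positive semidefinite with
`X ≥ W ≥ Y`, `X ≥ Z ≥ Y` and `X + Y ≥ W + Z` (in the Löwner order), then
`det X + det Y ≥ det W + det Z`. -/
theorem det_add_det_ge_det_add_det {n : ℕ}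
    (X Y W Z : Matrix (Fin n) (Fin n) ℂ)
    (hX : X.PosSemidef) (hY : Y.PosSemidef) (hW : W.PosSemidef) (hZ : Z.PosSemidef)
    (hXW : (X - W).PosSemidef) (hWY : (W - Y).PosSemidef)
    (hXZ : (X - Z).PosSemidef) (hZY : (Z - Y).PosSemidef)
    (hsum : (X + Y - (W + Z)).PosSemidef) :
    X.det.re + Y.det.re ≥ W.det.re + Z.det.re :=
  det_add_det_ge_det_add_det_general X Y W Z hY hWY hZY hsum
end

section
/- Let A be an n × n positive semidefinite complex matrix partitioned as a 2 × 2 block matrix A = [[A₁₁, A₁₂],[A₂₁, A₂₂]] with A₁₁ and A₂₂ square diagonal blocks. Then ∏_{i=1}^{n} a_{ii} ≥ det A₁₁ · det A₂₂ ≥ det A, where a_{ii} are the diagonal entries of A, all quantities are nonnegative reals, and the inequalities are of real numbers. -/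
/-!
If `A₁₁` is invertible, then `det A = det A₁₁ · det S` for the Schur complement
`S = A₂₂ - A₁₂ᴴ A₁₁⁻¹ A₁₂`, which is positive semidefinite. As `A₂₂` is `S` plus the positive
semidefinite matrix `A₁₂ᴴ A₁₁⁻¹ A₁₂`, `det S ≤ det A₂₂` by monotonicity of the determinant; if `A₁₁`
is singular, so is `A`. Monotonicity, `det S ≤ det (S + P)`, reduces through a factorisation
`S = Bᴴ B` with `B` invertible to `det (1 + M) ≥ 1` for `M = B⁻ᴴ P B⁻¹ ⪰ 0`, which is read off the
eigenvalues of `M`. Splitting off one index at a time turns Fischer's inequality into Hadamard's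
inequality `det A ≤ ∏ aᵢᵢ`, which, applied to the two diagonal blocks, gives the other half.
-/

open Matrix ComplexOrder

namespace Matrix

variable {m n 𝕜 : Type*} [Fintype m] [Fintype n] [DecidableEq m] [DecidableEq n] [RCLike 𝕜]

namespace PosSemidef

theorem one_le_det_one_add {M : Matrix n n 𝕜} (hM : M.PosSemidef) : 1 ≤ det (1 + M) := by
  rw [hM.1.spectral_theorem, ← map_one (Unitary.conjStarAlgAut 𝕜 _ hM.1.eigenvectorUnitary),
    ← map_add, Unitary.conjStarAlgAut_apply, det_mul, det_mul, mul_right_comm, ← det_mul,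
    Unitary.mul_star_self_of_mem hM.1.eigenvectorUnitary.2, det_one, one_mul, ← diagonal_one,
    diagonal_add, det_diagonal]
  simpa using Finset.prod_le_prod (s := Finset.univ) (f := fun _ ↦ (1 : 𝕜)) (fun _ _ ↦ zero_le_one)
    fun i _ ↦ le_add_of_nonneg_right (by simpa using hM.eigenvalues_nonneg i)

open scoped MatrixOrder in
theorem det_le_det_add_s15 {S P : Matrix n n 𝕜} (hS : S.PosSemidef) (hP : P.PosSemidef) :
    det S ≤ det (S + P) := by
  rcases eq_or_ne (det S) 0 with hS₀ | hS₀
  · exact hS₀ ▸ (hS.add hP).det_nonneg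
  obtain ⟨B, rfl⟩ := CStarAlgebra.nonneg_iff_eq_star_mul_self.mp hS.nonneg
  rw [star_eq_conjTranspose] at hS hS₀ ⊢
  have hB : IsUnit B.det := isUnit_iff_ne_zero.mpr (right_ne_zero_of_mul (det_mul Bᴴ B ▸ hS₀))
  have hfactor : Bᴴ * B + P = Bᴴ * (1 + B⁻¹ᴴ * P * B⁻¹) * B := by
    rw [mul_add, add_mul, mul_one, ← mul_assoc, ← mul_assoc, ← conjTranspose_mul,
      nonsing_inv_mul _ hB, conjTranspose_one, one_mul, mul_assoc, nonsing_inv_mul _ hB, mul_one]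
  have hdet : det (Bᴴ * (1 + B⁻¹ᴴ * P * B⁻¹) * B) = det (Bᴴ * B) * det (1 + B⁻¹ᴴ * P * B⁻¹) := by
    simp only [det_mul]
    ring
  rw [hfactor, hdet]
  exact le_mul_of_one_le_right hS.det_nonneg (hP.conjTranspose_mul_mul_same _).one_le_det_one_add

theorem det_fromBlocks_le_mul {A : Matrix m m 𝕜} {B : Matrix m n 𝕜} {C : Matrix n m 𝕜}
    {D : Matrix n n 𝕜} (h : (fromBlocks A B C D).PosSemidef) :
    det (fromBlocks A B C D) ≤ det A * det D := by
  obtain rfl : C = Bᴴ := (isHermitian_fromBlocks_iff.mp h.1).2.1.symm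
  have hA : A.PosSemidef := h.submatrix Sum.inl
  by_cases hA' : A.PosDef
  · have := hA'.isUnit.invertible
    have hSchur := (hA'.fromBlocks₁₁ B D).mp h
    rw [det_fromBlocks₁₁, invOf_eq_nonsing_inv]
    refine mul_le_mul_of_nonneg_left ?_ hA.det_nonneg
    simpa using hSchur.det_le_det_add_s15 (hA.inv.conjTranspose_mul_mul_same B)
  · have h' : ¬ (fromBlocks A B Bᴴ D).PosDef := fun h' ↦ hA' (h'.submatrix Sum.inl_injective)
    rw [hA.posDef_iff_det_ne_zero, not_not] at hA'
    rw [h.posDef_iff_det_ne_zero, not_not] at h'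
    rw [hA', h', zero_mul]

theorem det_le_prod_diag_fin : ∀ {k : ℕ} {M : Matrix (Fin k) (Fin k) 𝕜}, M.PosSemidef →
    det M ≤ ∏ i, M i i
  | 0, M, _ => by simp
  | k + 1, M, hM => by
    set C := M.submatrix (finSumFinEquiv (m := k) (n := 1)) finSumFinEquiv
    have hC : (fromBlocks C.toBlocks₁₁ C.toBlocks₁₂ C.toBlocks₂₁ C.toBlocks₂₂).PosSemidef := by
      rw [fromBlocks_toBlocks]
      exact hM.submatrix _
    have hC₂₂ : det C.toBlocks₂₂ = M (Fin.last k) (Fin.last k) := by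
      simp [C, toBlocks₂₂]
      rfl
    calc det M = det (fromBlocks C.toBlocks₁₁ C.toBlocks₁₂ C.toBlocks₂₁ C.toBlocks₂₂) := by
          rw [fromBlocks_toBlocks, det_submatrix_equiv_self]
      _ ≤ det C.toBlocks₁₁ * det C.toBlocks₂₂ := det_fromBlocks_le_mul hC
      _ ≤ (∏ i : Fin k, M i.castSucc i.castSucc) * M (Fin.last k) (Fin.last k) := by
          rw [hC₂₂]
          exact mul_le_mul_of_nonneg_right (det_le_prod_diag_fin (hC.submatrix Sum.inl))
            hM.diag_nonneg
      _ = ∏ i, M i i := (Fin.prod_univ_castSucc fun i ↦ M i i).symm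

theorem det_le_prod_diag {M : Matrix n n 𝕜} (hM : M.PosSemidef) : det M ≤ ∏ i, M i i := by
  let e := Fintype.equivFin n
  rw [← det_submatrix_equiv_self e.symm, ← e.symm.prod_comp]
  exact det_le_prod_diag_fin (hM.submatrix e.symm)

end PosSemidef
end Matrix

/-- **Fischer's inequality (Lemma 2.4).** If the block matrix
`A = [[A₁₁, A₁₂], [A₂₁, A₂₂]]` is positive semidefinite with square diagonal
blocks, then `∏ᵢ aᵢᵢ ≥ det A₁₁ · det A₂₂ ≥ det A`. -/
theorem fischer_inequality {n₁ n₂ : ℕ}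
    (A₁₁ : Matrix (Fin n₁) (Fin n₁) ℂ) (A₁₂ : Matrix (Fin n₁) (Fin n₂) ℂ)
    (A₂₁ : Matrix (Fin n₂) (Fin n₁) ℂ) (A₂₂ : Matrix (Fin n₂) (Fin n₂) ℂ)
    (hA : (Matrix.fromBlocks A₁₁ A₁₂ A₂₁ A₂₂).PosSemidef) :
    (∏ i, ((Matrix.fromBlocks A₁₁ A₁₂ A₂₁ A₂₂) i i).re ≥
        A₁₁.det.re * A₂₂.det.re) ∧
      A₁₁.det.re * A₂₂.det.re ≥ (Matrix.fromBlocks A₁₁ A₁₂ A₂₁ A₂₂).det.re := by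
  have h₁₁ : A₁₁.PosSemidef := hA.submatrix Sum.inl
  have h₂₂ : A₂₂.PosSemidef := hA.submatrix Sum.inr
  have hre {z : ℂ} (hz : 0 ≤ z) : (z.re : ℂ) = z :=
    (Complex.eq_re_of_ofReal_le (Complex.ofReal_zero ▸ hz)).symm
  have hdet : ((A₁₁.det.re * A₂₂.det.re : ℝ) : ℂ) = A₁₁.det * A₂₂.det := by
    push_cast
    rw [hre h₁₁.det_nonneg, hre h₂₂.det_nonneg]
  have hdiag : ((∏ i, (fromBlocks A₁₁ A₁₂ A₂₁ A₂₂ i i).re : ℝ) : ℂ) =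
      (∏ i, A₁₁ i i) * ∏ j, A₂₂ j j := by
    push_cast
    simp only [Fintype.prod_sum_type, fromBlocks_apply₁₁, fromBlocks_apply₂₂, hre h₁₁.diag_nonneg,
      hre h₂₂.diag_nonneg]
  constructor
  · rw [ge_iff_le, ← Complex.real_le_real, hdet, hdiag]
    have h₁ := h₁₁.det_le_prod_diag
    exact mul_le_mul h₁ h₂₂.det_le_prod_diag h₂₂.det_nonneg (h₁₁.det_nonneg.trans h₁)
  · rw [ge_iff_le, ← Complex.real_le_real, hdet, hre hA.det_nonneg]
    exact hA.det_fromBlocks_le_mul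
end
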